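/- arXiv:1408.1903 — 3 statements merged into one kernel-verified Lean document; each statement's English description precedes it below -/
import Mathlib

section
/- Let f : W → M be a morphism of Wall forms, where W = W¹ is the standard Wall form of rank 1. Then f is split-injective (both components of f are injective, and the inclusion of the image splits), and there is an orthogonal direct-sum decomposition M = f(W) ⊥ f(W)^⊥ of M into the image of f and its orthogonal complement. -/
/-!
Framework: `H`-pairs and Wall forms, following N. Perlmutter,
"Homological stability for the moduli spaces of products of spheres".

A form parameter `(G, ∂, π, ε)` is recorded together with the two
compatibility identities `∂(ε•h) = ∂(h)` and `π(∂(h)) = h + ε•h`, which hold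
in the geometric situation considered in the paper and which are exactly the
conditions needed for the standard Wall forms `W^g` to exist.
-/

section HPairs

/-- An `H`-pair: a pair of abelian groups together with a ℤ-bilinear
(i.e. biadditive) map `τ : M₋ × H → M₊`. -/
structure HPair (H : Type) [AddCommGroup H] where
  Neg : Type
  Pos : Type
  [negGrp : AddCommGroup Neg]
  [posGrp : AddCommGroup Pos]
  tau : Neg →+ H →+ Pos

attribute [instance] HPair.negGrp HPair.posGrp

variable {H : Type} [AddCommGroup H]

/-- An `H`-map of `H`-pairs. -/
structure HPairHom (M N : HPair H) where
  neg : M.Neg →+ N.Neg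
  pos : M.Pos →+ N.Pos
  comm : ∀ x h, pos (M.tau x h) = N.tau (neg x) h

/-- An isomorphism of `H`-pairs. -/
structure HPairIso (M N : HPair H) where
  toHom : HPairHom M N
  invHom : HPairHom N M
  left_neg : ∀ x, invHom.neg (toHom.neg x) = x
  right_neg : ∀ x, toHom.neg (invHom.neg x) = x
  left_pos : ∀ y, invHom.pos (toHom.pos y) = y
  right_pos : ∀ y, toHom.pos (invHom.pos y) = y

/-- An `H`-pair is finitely generated if both component groups are. -/
def HPair.FG (M : HPair H) : Prop :=
  AddGroup.FG M.Neg ∧ AddGroup.FG M.Pos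

/-- The componentwise direct sum of two `H`-pairs. -/
@[reducible] def HPair.sum (M N : HPair H) : HPair H where
  Neg := M.Neg × N.Neg
  Pos := M.Pos × N.Pos
  tau :=
    { toFun := fun x => (M.tau x.1).prod (N.tau x.2)
      map_zero' := by
        refine AddMonoidHom.ext fun h => ?_
        simp [Prod.ext_iff]
      map_add' := by
        intro x y
        refine AddMonoidHom.ext fun h => ?_
        simp [Prod.ext_iff] }

/-- The left inclusion `M → M ⊕ N`. -/
def HPairHom.inl (M N : HPair H) : HPairHom M (M.sum N) where
  neg := AddMonoidHom.inl M.Neg N.Neg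
  pos := AddMonoidHom.inl M.Pos N.Pos
  comm := by
    intro x h
    simp [HPair.sum, Prod.ext_iff]

/-- The right inclusion `N → M ⊕ N`. -/
def HPairHom.inr (M N : HPair H) : HPairHom N (M.sum N) where
  neg := AddMonoidHom.inr M.Neg N.Neg
  pos := AddMonoidHom.inr M.Pos N.Pos
  comm := by
    intro x h
    simp [HPair.sum, Prod.ext_iff]

/-- The `H`-pair `P⁰`, with `P⁰₋ = 0`, `P⁰₊ = ℤ` and `τ = 0`. -/
def P0 (H : Type) [AddCommGroup H] : HPair H where
  Neg := PUnit
  Pos := ℤ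
  tau := 0

/-- The `H`-pair `P¹`, with `P¹₋ = ℤ`, `P¹₊ = H` and `τ(t, h) = t • h`. -/
def P1 (H : Type) [AddCommGroup H] : HPair H where
  Neg := ℤ
  Pos := H
  tau := zmultiplesHom (H →+ H) (AddMonoidHom.id H)

/-- The generating-set length `d(H)`: the minimal `k` such that there is a
surjection `ℤ^k → H`. -/
noncomputable def dlen (H : Type) [AddCommGroup H] : ℕ :=
  sInf { k : ℕ | ∃ φ : (Fin k → ℤ) →+ H, Function.Surjective φ }

end HPairs

section WallForms

variable {H : Type} [AddCommGroup H]

/-- A form parameter `(G, ∂, π, ε)` for the category of `H`-pairs.  The two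
compatibility identities `bd_eps` and `pi_bd` hold in the geometric setting of
the paper and are needed for the standard Wall forms to exist. -/
structure FormParameter (H : Type) [AddCommGroup H] where
  G : HPair H
  bd : H →+ G.Pos
  pi : G.Pos →+ H
  eps : ℤ
  eps_pm : eps = 1 ∨ eps = -1
  bd_eps : ∀ h : H, bd (eps • h) = bd h
  pi_bd : ∀ h : H, pi (bd h) = h + eps • h

variable {P : FormParameter H}

/-- A Wall form structure (with parameter `P`) on the `H`-pair `C`. -/
structure WallAux (P : FormParameter H) (C : HPair H) where
  lam : C.Neg →+ C.Pos →+ ℤ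
  mu : C.Pos →+ C.Pos →+ H
  alphaNeg : C.Neg →+ P.G.Neg
  alphaPos : C.Pos → P.G.Pos
  mu_symm : ∀ y y', mu y y' = P.eps • mu y' y
  lam_tau : ∀ x x' h, lam x (C.tau x' h) = 0
  mu_tau : ∀ x h y, mu (C.tau x h) y = lam x y • h
  alphaPos_add : ∀ y y', alphaPos (y + y') = alphaPos y + alphaPos y' + P.bd (mu y y')
  mu_diag : ∀ y, mu y y = P.pi (alphaPos y)
  alphaPos_tau : ∀ x h, alphaPos (C.tau x h) = P.G.tau (alphaNeg x) h

/-- A Wall form with parameter `P`: a finitely generated `H`-pair together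
with a Wall form structure. -/
structure WallForm (P : FormParameter H) where
  carrier : HPair H
  fgNeg : AddGroup.FG carrier.Neg
  fgPos : AddGroup.FG carrier.Pos
  str : WallAux P carrier

/-- The property of an `H`-map to preserve all values of `λ`, `μ`, `α₋`, `α₊`. -/
def IsWallHom {C D : HPair H} (S : WallAux P C) (T : WallAux P D)
    (f : HPairHom C D) : Prop :=
  (∀ x y, T.lam (f.neg x) (f.pos y) = S.lam x y) ∧
  (∀ y y', T.mu (f.pos y) (f.pos y') = S.mu y y') ∧
  (∀ x, T.alphaNeg (f.neg x) = S.alphaNeg x) ∧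
  (∀ y, T.alphaPos (f.pos y) = S.alphaPos y)

/-- A morphism of Wall forms. -/
structure WallHom (M N : WallForm P) where
  hom : HPairHom M.carrier N.carrier
  isWall : IsWallHom M.str N.str hom

/-- An isomorphism of Wall forms: a morphism with a two-sided inverse morphism. -/
structure WallIso (M N : WallForm P) where
  toHom : WallHom M N
  invHom : WallHom N M
  left_neg : ∀ x, invHom.hom.neg (toHom.hom.neg x) = x
  right_neg : ∀ x, toHom.hom.neg (invHom.hom.neg x) = x
  left_pos : ∀ y, invHom.hom.pos (toHom.hom.pos y) = y
  right_pos : ∀ y, toHom.hom.pos (invHom.hom.pos y) = y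

end WallForms
section Extra

variable {H : Type} [AddCommGroup H] {P : FormParameter H}

/-- A subgroup of a finitely generated abelian group is finitely generated. -/
theorem addGroup_fg_subgroup {A : Type} [AddCommGroup A] (hA : AddGroup.FG A)
    (S : AddSubgroup A) : AddGroup.FG S := by
  haveI : Module.Finite ℤ A := Module.Finite.iff_addGroup_fg.mpr hA
  haveI : IsNoetherian ℤ A := isNoetherian_of_isNoetherianRing_of_finite ℤ A
  have h : (AddSubgroup.toIntSubmodule S).FG := IsNoetherian.noetherian _
  have h2 : Module.Finite ℤ (AddSubgroup.toIntSubmodule S) := Module.Finite.iff_fg.mpr h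
  exact Module.Finite.iff_addGroup_fg.mp h2

theorem addGroup_fg_of_module_finite {A : Type} [AddCommGroup A]
    [Module.Finite ℤ A] : AddGroup.FG A :=
  Module.Finite.iff_addGroup_fg.mp inferInstance

end Extra

section StdWall

variable {H : Type} [AddCommGroup H]

/-- The underlying `H`-pair of the standard Wall form of rank `g`:
`W^g₋ = ℤ^g` and `W^g₊ = ℤ^g × H^g`  (the first factor records the
`b`-coordinates, the second the `τ(a_i, -)`-coordinates). -/
@[reducible] def stdPair (H : Type) [AddCommGroup H] (g : ℕ) : HPair H where
  Neg := Fin g → ℤ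
  Pos := (Fin g → ℤ) × (Fin g → H)
  tau :=
    { toFun := fun x =>
        { toFun := fun h => (0, fun i => x i • h)
          map_zero' := by
            refine Prod.ext rfl ?_
            funext i
            simp
          map_add' := by
            intro h h'
            refine Prod.ext (by simp) ?_
            funext i
            simp [smul_add] }
      map_zero' := by
        refine AddMonoidHom.ext fun h => ?_
        refine Prod.ext rfl ?_
        funext i
        simp
      map_add' := by
        intro x x'
        refine AddMonoidHom.ext fun h => ?_
        refine Prod.ext (by simp) ?_
        funext i
        simp [add_smul] }

variable (P : FormParameter H)

/-- The standard Wall form `W^g` of rank `g` with parameter `P`. -/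
def stdWall [AddGroup.FG H] (g : ℕ) : WallForm P where
  carrier := stdPair H g
  fgNeg := by
    have : Module.Finite ℤ (Fin g → ℤ) := inferInstance
    exact addGroup_fg_of_module_finite
  fgPos := by
    haveI : Module.Finite ℤ H := Module.Finite.iff_addGroup_fg.mpr ‹AddGroup.FG H›
    have : Module.Finite ℤ ((Fin g → ℤ) × (Fin g → H)) := inferInstance
    exact addGroup_fg_of_module_finite
  str :=
    { lam :=
        { toFun := fun x =>
            { toFun := fun w => ∑ i, x i * w.1 i
              map_zero' := by simp
              map_add' := by
                intro w w'
                simp [mul_add, Finset.sum_add_distrib] }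
          map_zero' := by
            refine AddMonoidHom.ext fun w => ?_
            show (∑ i, (0 : Fin g → ℤ) i * w.1 i) = 0
            simp
          map_add' := by
            intro x x'
            refine AddMonoidHom.ext fun w => ?_
            simp [add_mul, Finset.sum_add_distrib] }
      mu :=
        { toFun := fun w =>
            { toFun := fun w' => (∑ i, w'.1 i • w.2 i) + P.eps • ∑ i, w.1 i • w'.2 i
              map_zero' := by simp
              map_add' := by
                intro w' w''
                simp only [Prod.fst_add, Prod.snd_add, Pi.add_apply, add_smul, smul_add,
                  Finset.sum_add_distrib]
                abel }
          map_zero' := by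
            refine AddMonoidHom.ext fun w' => ?_
            simp
          map_add' := by
            intro w w'
            refine AddMonoidHom.ext fun w'' => ?_
            simp only [Prod.fst_add, Prod.snd_add, Pi.add_apply, add_smul, smul_add,
              Finset.sum_add_distrib, AddMonoidHom.coe_mk, ZeroHom.coe_mk,
              AddMonoidHom.add_apply]
            abel }
      alphaNeg := 0
      alphaPos := fun w => P.bd (∑ i, w.1 i • w.2 i)
      mu_symm := by
        intro y y'
        have he : P.eps * P.eps = 1 := by
          rcases P.eps_pm with h | h <;> simp [h]
        show (∑ i, y'.1 i • y.2 i) + P.eps • ∑ i, y.1 i • y'.2 i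
            = P.eps • ((∑ i, y.1 i • y'.2 i) + P.eps • ∑ i, y'.1 i • y.2 i)
        rw [smul_add, smul_smul, he, one_smul, add_comm]
      lam_tau := by
        intro x x' h
        show (∑ i, x i * (0 : Fin _ → ℤ) i) = 0
        simp
      mu_tau := by
        intro x h y
        show (∑ i, y.1 i • (fun i => x i • h) i) + P.eps • ∑ i, (0 : Fin _ → ℤ) i • y.2 i
            = (∑ i, x i * y.1 i) • h
        simp only [Pi.zero_apply, zero_smul, Finset.sum_const_zero, smul_zero, add_zero]
        rw [Finset.sum_smul]
        congr 1
        funext i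
        rw [smul_smul, mul_comm]
      alphaPos_add := by
        intro y y'
        show P.bd (∑ i, (y.1 i + y'.1 i) • (y.2 i + y'.2 i))
            = P.bd (∑ i, y.1 i • y.2 i) + P.bd (∑ i, y'.1 i • y'.2 i)
              + P.bd ((∑ i, y'.1 i • y.2 i) + P.eps • ∑ i, y.1 i • y'.2 i)
        have expand : ∀ i : Fin _, (y.1 i + y'.1 i) • (y.2 i + y'.2 i)
            = (y.1 i • y.2 i + y'.1 i • y'.2 i) + (y'.1 i • y.2 i + y.1 i • y'.2 i) := by
          intro i
          rw [add_smul, smul_add, smul_add]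
          abel
        rw [Finset.sum_congr rfl fun i _ => expand i, Finset.sum_add_distrib,
          Finset.sum_add_distrib, Finset.sum_add_distrib, map_add, map_add, map_add, map_add,
          P.bd_eps]
      mu_diag := by
        intro y
        show (∑ i, y.1 i • y.2 i) + P.eps • ∑ i, y.1 i • y.2 i
            = P.pi (P.bd (∑ i, y.1 i • y.2 i))
        rw [P.pi_bd]
      alphaPos_tau := by
        intro x h
        show P.bd (∑ i, (0 : Fin _ → ℤ) i • (fun i => x i • h) i) = P.G.tau ((0 : _ →+ _) x) h
        simp }

variable {P}

/-- The `i`-th standard generator `a_i ∈ W^g₋`. -/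
def stdA [AddGroup.FG H] {g : ℕ} (i : Fin g) : (stdWall P g).carrier.Neg :=
  Pi.single i 1

/-- The `i`-th standard generator `b_i ∈ W^g₊`. -/
def stdB [AddGroup.FG H] {g : ℕ} (i : Fin g) : (stdWall P g).carrier.Pos :=
  (Pi.single i 1, 0)

end StdWall
section SubPairs

variable {H : Type} [AddCommGroup H] {P : FormParameter H}

/-- A sub-`H`-pair of the `H`-pair `C`. -/
structure SubPair (C : HPair H) where
  neg : AddSubgroup C.Neg
  pos : AddSubgroup C.Pos
  tau_mem : ∀ x ∈ neg, ∀ h, C.tau x h ∈ pos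

/-- The componentwise intersection of two sub-`H`-pairs. -/
def SubPair.inf {C : HPair H} (N N' : SubPair C) : SubPair C where
  neg := N.neg ⊓ N'.neg
  pos := N.pos ⊓ N'.pos
  tau_mem := fun x hx h => ⟨N.tau_mem x hx.1 h, N'.tau_mem x hx.2 h⟩

/-- The image of an `H`-map, as a sub-`H`-pair of the codomain. -/
def HPairHom.rangeSub {C D : HPair H} (f : HPairHom C D) : SubPair D where
  neg := f.neg.range
  pos := f.pos.range
  tau_mem := by
    rintro x ⟨a, rfl⟩ h
    exact ⟨C.tau a h, f.comm a h⟩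

/-- The kernel of an `H`-map, as a sub-`H`-pair of the domain. -/
def HPairHom.kerSub {C D : HPair H} (f : HPairHom C D) : SubPair C where
  neg := f.neg.ker
  pos := f.pos.ker
  tau_mem := by
    intro x hx h
    have hx' : f.neg x = 0 := hx
    have h2 : f.pos (C.tau x h) = D.tau (f.neg x) h := f.comm x h
    rw [hx'] at h2
    have h3 : f.pos (C.tau x h) = 0 := by
      rw [h2, map_zero, AddMonoidHom.zero_apply]
    exact h3

/-- The orthogonal complement of a sub-`H`-pair, with respect to a Wall form
structure `S` on the ambient `H`-pair. -/
def SubPair.perp {C : HPair H} (S : WallAux P C) (N : SubPair C) : SubPair C where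
  neg :=
    { carrier := { x | ∀ w ∈ N.pos, S.lam x w = 0 }
      add_mem' := by
        intro a b ha hb w hw
        rw [map_add, AddMonoidHom.add_apply, ha w hw, hb w hw, add_zero]
      zero_mem' := by
        intro w hw
        rw [map_zero, AddMonoidHom.zero_apply]
      neg_mem' := by
        intro a ha w hw
        rw [map_neg, AddMonoidHom.neg_apply, ha w hw, neg_zero] }
  pos :=
    { carrier := { y | (∀ v ∈ N.neg, S.lam v y = 0) ∧ ∀ w ∈ N.pos, S.mu y w = 0 }
      add_mem' := by
        intro a b ha hb
        refine ⟨fun v hv => ?_, fun w hw => ?_⟩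
        · rw [map_add, ha.1 v hv, hb.1 v hv, add_zero]
        · rw [map_add, AddMonoidHom.add_apply, ha.2 w hw, hb.2 w hw, add_zero]
      zero_mem' := by
        refine ⟨fun v hv => ?_, fun w hw => ?_⟩
        · rw [map_zero]
        · rw [map_zero, AddMonoidHom.zero_apply]
      neg_mem' := by
        intro a ha
        refine ⟨fun v hv => ?_, fun w hw => ?_⟩
        · rw [map_neg, ha.1 v hv, neg_zero]
        · rw [map_neg, AddMonoidHom.neg_apply, ha.2 w hw, neg_zero] }
  tau_mem := by
    intro x hx h
    refine ⟨fun v hv => S.lam_tau v x h, fun w hw => ?_⟩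
    rw [S.mu_tau x h w, hx w hw, zero_smul]

/-- Orthogonality of two sub-`H`-pairs with respect to a Wall form structure
`S`: trivial intersection and mutual containment in orthogonal complements. -/
def OrthogonalIn {C : HPair H} (S : WallAux P C) (N N' : SubPair C) : Prop :=
  N.neg ⊓ N'.neg = ⊥ ∧ N.pos ⊓ N'.pos = ⊥ ∧
  N.neg ≤ (N'.perp S).neg ∧ N.pos ≤ (N'.perp S).pos ∧
  N'.neg ≤ (N.perp S).neg ∧ N'.pos ≤ (N.perp S).pos

/-- The underlying `H`-pair of a sub-`H`-pair. -/
@[reducible] def SubPair.toPair {C : HPair H} (N : SubPair C) : HPair H where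
  Neg := N.neg
  Pos := N.pos
  tau :=
    { toFun := fun x =>
        { toFun := fun h => ⟨C.tau x h, N.tau_mem x x.2 h⟩
          map_zero' := by
            apply Subtype.ext
            simp
          map_add' := by
            intro h h'
            apply Subtype.ext
            simp }
      map_zero' := by
        refine AddMonoidHom.ext fun h => ?_
        apply Subtype.ext
        simp
      map_add' := by
        intro x x'
        refine AddMonoidHom.ext fun h => ?_
        apply Subtype.ext
        simp }

/-- The restriction of a Wall form structure to a sub-`H`-pair. -/
def SubPair.restrict {C : HPair H} (S : WallAux P C) (N : SubPair C) :
    WallAux P N.toPair where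
  lam :=
    { toFun := fun x => (S.lam (x : C.Neg)).comp N.pos.subtype
      map_zero' := by
        refine AddMonoidHom.ext fun y => ?_
        simp
      map_add' := by
        intro x x'
        refine AddMonoidHom.ext fun y => ?_
        simp }
  mu :=
    { toFun := fun y => (S.mu (y : C.Pos)).comp N.pos.subtype
      map_zero' := by
        refine AddMonoidHom.ext fun y => ?_
        simp
      map_add' := by
        intro y y'
        refine AddMonoidHom.ext fun y'' => ?_
        simp }
  alphaNeg := S.alphaNeg.comp N.neg.subtype
  alphaPos := fun y => S.alphaPos (y : C.Pos)
  mu_symm := fun y y' => S.mu_symm (y : C.Pos) y'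
  lam_tau := fun x x' h => S.lam_tau (x : C.Neg) x' h
  mu_tau := fun x h y => S.mu_tau (x : C.Neg) h y
  alphaPos_add := fun y y' => S.alphaPos_add (y : C.Pos) y'
  mu_diag := fun y => S.mu_diag (y : C.Pos)
  alphaPos_tau := fun x h => S.alphaPos_tau (x : C.Neg) h

/-- A sub-`H`-pair of (the carrier of) a Wall form is itself a Wall form, via
the restricted structure maps. -/
def SubPair.toWall {M : WallForm P} (N : SubPair M.carrier) : WallForm P where
  carrier := N.toPair
  fgNeg := addGroup_fg_subgroup M.fgNeg N.neg
  fgPos := addGroup_fg_subgroup M.fgPos N.pos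
  str := N.restrict M.str

end SubPairs
section SumAndRank

variable {H : Type} [AddCommGroup H] {P : FormParameter H}

/-- The orthogonal direct sum of two Wall forms. -/
def WallForm.sum (M N : WallForm P) : WallForm P where
  carrier := M.carrier.sum N.carrier
  fgNeg := by
    haveI : Module.Finite ℤ M.carrier.Neg := Module.Finite.iff_addGroup_fg.mpr M.fgNeg
    haveI : Module.Finite ℤ N.carrier.Neg := Module.Finite.iff_addGroup_fg.mpr N.fgNeg
    have : Module.Finite ℤ (M.carrier.Neg × N.carrier.Neg) := inferInstance
    exact Module.Finite.iff_addGroup_fg.mp this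
  fgPos := by
    haveI : Module.Finite ℤ M.carrier.Pos := Module.Finite.iff_addGroup_fg.mpr M.fgPos
    haveI : Module.Finite ℤ N.carrier.Pos := Module.Finite.iff_addGroup_fg.mpr N.fgPos
    have : Module.Finite ℤ (M.carrier.Pos × N.carrier.Pos) := inferInstance
    exact Module.Finite.iff_addGroup_fg.mp this
  str :=
    { lam :=
        { toFun := fun x => (M.str.lam x.1).coprod (N.str.lam x.2)
          map_zero' := by
            refine AddMonoidHom.ext fun y => ?_
            simp
          map_add' := by
            intro x x'
            refine AddMonoidHom.ext fun y => ?_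
            simp
            abel }
      mu :=
        { toFun := fun y => (M.str.mu y.1).coprod (N.str.mu y.2)
          map_zero' := by
            refine AddMonoidHom.ext fun y' => ?_
            simp
          map_add' := by
            intro y y'
            refine AddMonoidHom.ext fun y'' => ?_
            simp
            abel }
      alphaNeg := (M.str.alphaNeg).coprod (N.str.alphaNeg)
      alphaPos := fun y => M.str.alphaPos y.1 + N.str.alphaPos y.2
      mu_symm := by
        intro y y'
        show M.str.mu y.1 y'.1 + N.str.mu y.2 y'.2
            = P.eps • (M.str.mu y'.1 y.1 + N.str.mu y'.2 y.2)
        rw [smul_add, M.str.mu_symm y.1 y'.1, N.str.mu_symm y.2 y'.2]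
      lam_tau := by
        intro x x' h
        show M.str.lam x.1 (M.carrier.tau x'.1 h) + N.str.lam x.2 (N.carrier.tau x'.2 h) = 0
        rw [M.str.lam_tau, N.str.lam_tau, add_zero]
      mu_tau := by
        intro x h y
        show M.str.mu (M.carrier.tau x.1 h) y.1 + N.str.mu (N.carrier.tau x.2 h) y.2
            = (M.str.lam x.1 y.1 + N.str.lam x.2 y.2) • h
        rw [M.str.mu_tau, N.str.mu_tau, add_smul]
      alphaPos_add := by
        intro y y'
        show M.str.alphaPos (y.1 + y'.1) + N.str.alphaPos (y.2 + y'.2)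
            = (M.str.alphaPos y.1 + N.str.alphaPos y.2)
              + (M.str.alphaPos y'.1 + N.str.alphaPos y'.2)
              + P.bd (M.str.mu y.1 y'.1 + N.str.mu y.2 y'.2)
        rw [M.str.alphaPos_add, N.str.alphaPos_add, map_add]
        abel
      mu_diag := by
        intro y
        show M.str.mu y.1 y.1 + N.str.mu y.2 y.2
            = P.pi (M.str.alphaPos y.1 + N.str.alphaPos y.2)
        rw [map_add, M.str.mu_diag, N.str.mu_diag]
      alphaPos_tau := by
        intro x h
        show M.str.alphaPos (M.carrier.tau x.1 h) + N.str.alphaPos (N.carrier.tau x.2 h)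
            = P.G.tau (M.str.alphaNeg x.1 + N.str.alphaNeg x.2) h
        rw [M.str.alphaPos_tau, N.str.alphaPos_tau, map_add, AddMonoidHom.add_apply] }

variable [AddGroup.FG H]

/-- `rankGE M g` expresses the inequality `r(M) ≥ g` for the rank of a Wall
form: there exists a morphism of Wall forms `W^g → M`. -/
def rankGE (M : WallForm P) (g : ℕ) : Prop :=
  Nonempty (WallHom (stdWall P g) M)

/-- `srankGE M g` expresses the inequality `r̄(M) ≥ g` for the stable rank of
a Wall form: `r(M ⊕ W^j) ≥ g + j` for some `j`. -/
def srankGE (M : WallForm P) (g : ℕ) : Prop :=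
  ∃ j : ℕ, rankGE (M.sum (stdWall P j)) (g + j)

end SumAndRank

section Duality

variable {H : Type} [AddCommGroup H] {P : FormParameter H}

/-- The duality map `T⁰ : M₋ → Hom(M, P⁰)` of a Wall form. -/
def dualT0 (M : WallForm P) (v : M.carrier.Neg) : HPairHom M.carrier (P0 H) where
  neg := 0
  pos := M.str.lam v
  comm := by
    intro x h
    show M.str.lam v (M.carrier.tau x h) = ((P0 H).tau 0) h
    rw [M.str.lam_tau]
    show (0 : ℤ) = ((0 : _ →+ (H →+ ℤ)) 0) h
    rfl

/-- The duality map `T¹ : M₊ → Hom(M, P¹)` of a Wall form. -/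
def dualT1 (M : WallForm P) (w : M.carrier.Pos) : HPairHom M.carrier (P1 H) where
  neg := M.str.lam.flip w
  pos := M.str.mu.flip w
  comm := by
    intro x h
    show M.str.mu (M.carrier.tau x h) w = (P1 H).tau (M.str.lam x w) h
    rw [M.str.mu_tau]
    show M.str.lam x w • h = (M.str.lam x w • AddMonoidHom.id H) h
    simp

end Duality

/-!
Write `a = f(a₁)` and `b = f(b₁)`. Since `f` preserves the form, `λ(a, b) = 1`, and the
map `r(x) = λ(x, b)`, `r(y) = (λ(a, y), μ(y, b))` is an `H`-map `M → W` retracting `f`.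
Because `f(W)` is spanned by `a`, `b` and `τ(a, H)`, and `μ(y, τ(a, h)) = ε λ(a, y) h`,
the orthogonal complement of `f(W)` is exactly the kernel of `r`; image and kernel of a
retraction are complementary, which gives the orthogonal decomposition.
-/

theorem AddMonoidHom.isCompl_range_ker_of_leftInverse {A B : Type*} [AddCommGroup A]
    [AddCommGroup B] {f : A →+ B} {r : B →+ A} (hrf : Function.LeftInverse r f) :
    IsCompl f.range r.ker := by
  constructor
  · rw [disjoint_iff, eq_bot_iff]
    rintro _ ⟨⟨x, rfl⟩, hx⟩
    change r (f x) = 0 at hx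
    rw [hrf] at hx
    rw [hx, map_zero]
    exact zero_mem _
  · rw [codisjoint_iff, eq_top_iff]
    intro y _
    rw [← add_sub_cancel (f (r y)) y]
    refine AddSubgroup.add_mem_sup ⟨r y, rfl⟩ ?_
    rw [AddMonoidHom.mem_ker, map_sub, hrf, sub_self]

namespace SubPair

variable {H : Type} [AddCommGroup H] {P : FormParameter H} {C : HPair H}
  (S : WallAux P C) (N : SubPair C)

theorem neg_le_perp_perp_neg : N.neg ≤ ((N.perp S).perp S).neg :=
  fun _ hv _ hw => hw.1 _ hv

theorem pos_le_perp_perp_pos : N.pos ≤ ((N.perp S).perp S).pos := by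
  refine fun w hw => ⟨fun v hv => hv w hw, fun u hu => ?_⟩
  rw [S.mu_symm, hu.2 w hw, smul_zero]

theorem orthogonalIn_perp (hneg : N.neg ⊓ (N.perp S).neg = ⊥)
    (hpos : N.pos ⊓ (N.perp S).pos = ⊥) : OrthogonalIn S N (N.perp S) :=
  ⟨hneg, hpos, neg_le_perp_perp_neg S N, pos_le_perp_perp_pos S N, le_rfl, le_rfl⟩

end SubPair

section StdWallOne

variable {H : Type} [AddCommGroup H] [AddGroup.FG H] {P : FormParameter H}

theorem stdWall_one_lam (x : (stdWall P 1).carrier.Neg) (w : (stdWall P 1).carrier.Pos) :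
    (stdWall P 1).str.lam x w = x 0 * w.1 0 :=
  show ∑ i, x i * w.1 i = _ from Fin.sum_univ_one _

theorem stdWall_one_mu (y w : (stdWall P 1).carrier.Pos) :
    (stdWall P 1).str.mu y w = w.1 0 • y.2 0 + P.eps • (y.1 0 • w.2 0) := by
  show (∑ i, w.1 i • y.2 i) + P.eps • ∑ i, y.1 i • w.2 i = _
  rw [Fin.sum_univ_one, Fin.sum_univ_one]

theorem stdWall_one_neg_eq (x : (stdWall P 1).carrier.Neg) :
    x = x 0 • stdA (P := P) 0 := by
  funext i
  fin_cases i
  change x 0 = x 0 * (Pi.single 0 1 : Fin 1 → ℤ) 0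
  simp

theorem stdWall_one_pos_eq (y : (stdWall P 1).carrier.Pos) :
    y = y.1 0 • stdB (P := P) 0 + (stdWall P 1).carrier.tau (stdA 0) (y.2 0) := by
  refine Prod.ext (funext fun i => ?_) (funext fun i => ?_) <;> fin_cases i
  · change y.1 0 = y.1 0 * (Pi.single 0 1 : Fin 1 → ℤ) 0 + 0
    simp
  · change y.2 0 = y.1 0 • (0 : H) + (Pi.single 0 1 : Fin 1 → ℤ) 0 • y.2 0
    simp

end StdWallOne

namespace WallHom

variable {H : Type} [AddCommGroup H] [AddGroup.FG H] {P : FormParameter H}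
  {M : WallForm P} (f : WallHom (stdWall P 1) M)

theorem neg_apply (x : (stdWall P 1).carrier.Neg) :
    f.hom.neg x = x 0 • f.hom.neg (stdA 0) := by
  conv_lhs => rw [stdWall_one_neg_eq x]
  rw [map_zsmul]

theorem pos_apply (y : (stdWall P 1).carrier.Pos) :
    f.hom.pos y = y.1 0 • f.hom.pos (stdB 0) + M.carrier.tau (f.hom.neg (stdA 0)) (y.2 0) := by
  conv_lhs => rw [stdWall_one_pos_eq y]
  rw [map_add, map_zsmul, f.hom.comm]

theorem lam_stdA_pos (y : (stdWall P 1).carrier.Pos) :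
    M.str.lam (f.hom.neg (stdA 0)) (f.hom.pos y) = y.1 0 := by
  rw [f.isWall.1, stdWall_one_lam]
  simp [stdA]

theorem lam_neg_stdB (x : (stdWall P 1).carrier.Neg) :
    M.str.lam (f.hom.neg x) (f.hom.pos (stdB 0)) = x 0 := by
  rw [f.isWall.1, stdWall_one_lam]
  simp [stdB]

theorem mu_pos_stdB (y : (stdWall P 1).carrier.Pos) :
    M.str.mu (f.hom.pos y) (f.hom.pos (stdB 0)) = y.2 0 := by
  rw [f.isWall.2.1, stdWall_one_mu]
  simp [stdB]

def retraction : HPairHom M.carrier (stdWall P 1).carrier where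
  neg := AddMonoidHom.pi fun _ => M.str.lam.flip (f.hom.pos (stdB 0))
  pos := (AddMonoidHom.pi fun _ => M.str.lam (f.hom.neg (stdA 0))).prod
    (AddMonoidHom.pi fun _ => M.str.mu.flip (f.hom.pos (stdB 0)))
  comm _ _ := Prod.ext (funext fun _ => M.str.lam_tau _ _ _) (funext fun _ => M.str.mu_tau _ _ _)

theorem leftInverse_retraction_neg : Function.LeftInverse f.retraction.neg f.hom.neg :=
  fun x => funext fun i => by fin_cases i; exact f.lam_neg_stdB x

theorem leftInverse_retraction_pos : Function.LeftInverse f.retraction.pos f.hom.pos :=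
  fun y => Prod.ext (funext fun i => by fin_cases i; exact f.lam_stdA_pos y)
    (funext fun i => by fin_cases i; exact f.mu_pos_stdB y)

theorem mem_ker_retraction_neg (x : M.carrier.Neg) :
    x ∈ f.retraction.neg.ker ↔ M.str.lam x (f.hom.pos (stdB 0)) = 0 := by
  rw [AddMonoidHom.mem_ker]
  exact ⟨fun h => congrFun h 0, fun h => funext fun i => by fin_cases i; exact h⟩

theorem mem_ker_retraction_pos (y : M.carrier.Pos) :
    y ∈ f.retraction.pos.ker ↔
      M.str.lam (f.hom.neg (stdA 0)) y = 0 ∧ M.str.mu y (f.hom.pos (stdB 0)) = 0 := by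
  rw [AddMonoidHom.mem_ker]
  exact ⟨fun h => ⟨congrFun (congrArg Prod.fst h) 0, congrFun (congrArg Prod.snd h) 0⟩,
    fun ⟨ha, hb⟩ => Prod.ext (funext fun i => by fin_cases i; exact ha)
      (funext fun i => by fin_cases i; exact hb)⟩

theorem perp_rangeSub_neg : (f.hom.rangeSub.perp M.str).neg = f.retraction.neg.ker := by
  ext x
  rw [f.mem_ker_retraction_neg]
  refine ⟨fun hx => hx _ ⟨stdB 0, rfl⟩, ?_⟩
  rintro hb _ ⟨y, rfl⟩
  rw [f.pos_apply, map_add, map_zsmul, hb, M.str.lam_tau, smul_zero, add_zero]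

theorem perp_rangeSub_pos : (f.hom.rangeSub.perp M.str).pos = f.retraction.pos.ker := by
  ext y
  rw [f.mem_ker_retraction_pos]
  refine ⟨fun hy => ⟨hy.1 _ ⟨stdA 0, rfl⟩, hy.2 _ ⟨stdB 0, rfl⟩⟩, ?_⟩
  rintro ⟨ha, hb⟩
  refine ⟨?_, ?_⟩
  · rintro _ ⟨x, rfl⟩
    rw [f.neg_apply, map_zsmul, AddMonoidHom.smul_apply, ha, smul_zero]
  · rintro _ ⟨y', rfl⟩
    -- `μ(y, τ(a, h)) = ε λ(a, y) h` vanishes together with `λ(a, y)`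
    rw [f.pos_apply, map_add, map_zsmul, hb, M.str.mu_symm y, M.str.mu_tau, ha, zero_smul,
      smul_zero, smul_zero, add_zero]

end WallHom

/-- A morphism `f : W → M` of Wall forms is split-injective,
and `M` decomposes as the orthogonal direct sum of the image of `f` and its
orthogonal complement. -/
theorem statement_3 {H : Type} [AddCommGroup H] [AddGroup.FG H]
    (P : FormParameter H) (M : WallForm P) (f : WallHom (stdWall P 1) M) :
    Function.Injective f.hom.neg ∧ Function.Injective f.hom.pos ∧
    (∃ r : HPairHom M.carrier (stdWall P 1).carrier,
      (∀ x, r.neg (f.hom.neg x) = x) ∧ ∀ y, r.pos (f.hom.pos y) = y) ∧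
    OrthogonalIn M.str f.hom.rangeSub (f.hom.rangeSub.perp M.str) ∧
    f.hom.rangeSub.neg ⊔ (f.hom.rangeSub.perp M.str).neg = ⊤ ∧
    f.hom.rangeSub.pos ⊔ (f.hom.rangeSub.perp M.str).pos = ⊤ := by
  have hneg := AddMonoidHom.isCompl_range_ker_of_leftInverse f.leftInverse_retraction_neg
  have hpos := AddMonoidHom.isCompl_range_ker_of_leftInverse f.leftInverse_retraction_pos
  rw [← f.perp_rangeSub_neg] at hneg
  rw [← f.perp_rangeSub_pos] at hpos
  exact ⟨f.leftInverse_retraction_neg.injective, f.leftInverse_retraction_pos.injective,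
    ⟨f.retraction, f.leftInverse_retraction_neg, f.leftInverse_retraction_pos⟩,
    SubPair.orthogonalIn_perp M.str _ hneg.inf_eq_bot hpos.inf_eq_bot,
    hneg.sup_eq_top, hpos.sup_eq_top⟩
end

section
/- Let f : W^g → M be a morphism of Wall forms. Then the stable rank of the orthogonal complement of the image satisfies r̄(f(W^g)^⊥) ≥ r̄(M) − g. -/
/-!
Let `f : W^g → M` be a morphism of Wall forms, with `u_t = f(a_t)` and `v_t = f(b_t)`. The
coordinates `x ↦ (λ(x, v_t))_t` and `y ↦ ((λ(u_t, y))_t, (μ(y, v_t))_t)` form an `H`-map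
`c : M → W^g` which is adjoint to `f` for `λ` and `μ` and satisfies `c ∘ f = id`. Hence
`p = 1 - f ∘ c` lands in `f(W^g)^⊥`, and `(p, c) : M → f(W^g)^⊥ ⊕ W^g` preserves `λ`, `μ`, `α₋`
and `α₊`: the cross terms produced by `f ∘ c` cancel by adjointness, and `α₊(y) = α₊(p y) +
α₊(f c y)` because `μ(p y, f c y) = μ(c p y, c y) = 0`. A morphism `W^{k+j} → M ⊕ W^j` composed with
`(p, c) ⊕ id` and with `W^g ⊕ W^j → W^{g+j}` is then a morphism
`W^{k+j} → f(W^g)^⊥ ⊕ W^{g+j}`, which shows `r̄(f(W^g)^⊥) ≥ k - g`.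
-/

section WallHomBasics

variable {H : Type} [AddCommGroup H] {P : FormParameter H}

lemma WallAux.alphaPos_zero {C : HPair H} (S : WallAux P C) : S.alphaPos 0 = 0 := by
  simpa using S.alphaPos_add 0 0

lemma WallAux.mu_tau_right {C : HPair H} (S : WallAux P C) (y : C.Pos) (x : C.Neg) (h : H) :
    S.mu y (C.tau x h) = P.eps • S.lam x y • h := by
  rw [S.mu_symm, S.mu_tau]

namespace WallHom

variable {L M M' N N' : WallForm P}

@[simp] lemma lam_map (f : WallHom M N) (x : M.carrier.Neg) (y : M.carrier.Pos) :
    N.str.lam (f.hom.neg x) (f.hom.pos y) = M.str.lam x y :=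
  f.isWall.1 x y

@[simp] lemma mu_map (f : WallHom M N) (y y' : M.carrier.Pos) :
    N.str.mu (f.hom.pos y) (f.hom.pos y') = M.str.mu y y' :=
  f.isWall.2.1 y y'

@[simp] lemma alphaNeg_map (f : WallHom M N) (x : M.carrier.Neg) :
    N.str.alphaNeg (f.hom.neg x) = M.str.alphaNeg x :=
  f.isWall.2.2.1 x

@[simp] lemma alphaPos_map (f : WallHom M N) (y : M.carrier.Pos) :
    N.str.alphaPos (f.hom.pos y) = M.str.alphaPos y :=
  f.isWall.2.2.2 y

def id (M : WallForm P) : WallHom M M where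
  hom := ⟨AddMonoidHom.id _, AddMonoidHom.id _, fun _ _ => rfl⟩
  isWall := ⟨fun _ _ => rfl, fun _ _ => rfl, fun _ => rfl, fun _ => rfl⟩

def comp (g : WallHom M N) (f : WallHom L M) : WallHom L N where
  hom := ⟨g.hom.neg.comp f.hom.neg, g.hom.pos.comp f.hom.pos, fun x h => by
    simp only [AddMonoidHom.comp_apply, f.hom.comm, g.hom.comm]⟩
  isWall := by refine ⟨?_, ?_, ?_, ?_⟩ <;> intros <;> simp

def sumMap (f : WallHom M M') (f' : WallHom N N') : WallHom (M.sum N) (M'.sum N') where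
  hom := ⟨f.hom.neg.prodMap f'.hom.neg, f.hom.pos.prodMap f'.hom.pos, fun x h =>
    Prod.ext (f.hom.comm x.1 h) (f'.hom.comm x.2 h)⟩
  isWall :=
    ⟨fun x y => congrArg₂ (· + ·) (f.lam_map x.1 y.1) (f'.lam_map x.2 y.2),
      fun y y' => congrArg₂ (· + ·) (f.mu_map y.1 y'.1) (f'.mu_map y.2 y'.2),
      fun x => congrArg₂ (· + ·) (f.alphaNeg_map x.1) (f'.alphaNeg_map x.2),
      fun y => congrArg₂ (· + ·) (f.alphaPos_map y.1) (f'.alphaPos_map y.2)⟩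

def sumAssoc (L M N : WallForm P) : WallHom ((L.sum M).sum N) (L.sum (M.sum N)) where
  hom := ⟨(AddEquiv.prodAssoc ..).toAddMonoidHom, (AddEquiv.prodAssoc ..).toAddMonoidHom,
    fun _ _ => rfl⟩
  isWall := ⟨fun _ _ => (add_assoc ..).symm, fun _ _ => (add_assoc ..).symm,
    fun _ => (add_assoc ..).symm, fun _ => (add_assoc ..).symm⟩

def inr (M N : WallForm P) : WallHom N (M.sum N) where
  hom := HPairHom.inr M.carrier N.carrier
  isWall :=
    ⟨fun x y => show M.str.lam 0 0 + N.str.lam x y = _ by simp,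
      fun y y' => show M.str.mu 0 0 + N.str.mu y y' = _ by simp,
      fun x => show M.str.alphaNeg 0 + N.str.alphaNeg x = _ by simp,
      fun y => show M.str.alphaPos 0 + N.str.alphaPos y = _ by simp [WallAux.alphaPos_zero]⟩

end WallHom

end WallHomBasics

namespace Fin

variable {m n : ℕ} {α : Type*}

lemma append_zero_zero [Zero α] : append (0 : Fin m → α) (0 : Fin n → α) = 0 := by
  ext i
  refine addCases (fun i => ?_) (fun i => ?_) i <;> simp

lemma append_add_append [Add α] (x x' : Fin m → α) (y y' : Fin n → α) :
    append (x + x') (y + y') = append x y + append x' y' := by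
  ext i
  refine addCases (fun i => ?_) (fun i => ?_) i <;> simp

lemma append_comp {β : Type*} (F : α → β) (x : Fin m → α) (y : Fin n → α) :
    append (F ∘ x) (F ∘ y) = F ∘ append x y := by
  ext i
  refine addCases (fun i => ?_) (fun i => ?_) i <;> simp

lemma sum_univ_append₂ {β M : Type*} [AddCommMonoid M] (F : α → β → M) (x : Fin m → α)
    (y : Fin n → α) (x' : Fin m → β) (y' : Fin n → β) :
    ∑ i, F (append x y i) (append x' y' i) = ∑ i, F (x i) (x' i) + ∑ i, F (y i) (y' i) := by
  simp [sum_univ_add]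

end Fin

section StdWall

variable {H : Type} [AddCommGroup H] [AddGroup.FG H] {P : FormParameter H} {g : ℕ}

lemma stdWall_lam (x : (stdWall P g).carrier.Neg) (y : (stdWall P g).carrier.Pos) :
    (stdWall P g).str.lam x y = ∑ i, x i * y.1 i := rfl

lemma stdWall_mu (y y' : (stdWall P g).carrier.Pos) :
    (stdWall P g).str.mu y y' = (∑ i, y'.1 i • y.2 i) + P.eps • ∑ i, y.1 i • y'.2 i := rfl

def stdWallAppend (g j : ℕ) :
    WallHom ((stdWall P g).sum (stdWall P j)) (stdWall P (g + j)) where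
  hom :=
    { neg := ⟨⟨fun x => Fin.append x.1 x.2, Fin.append_zero_zero⟩,
        fun x x' => Fin.append_add_append x.1 x'.1 x.2 x'.2⟩
      pos := ⟨⟨fun y => (Fin.append y.1.1 y.2.1, Fin.append y.1.2 y.2.2),
          Prod.ext Fin.append_zero_zero Fin.append_zero_zero⟩,
        fun y y' => Prod.ext (Fin.append_add_append _ _ _ _) (Fin.append_add_append _ _ _ _)⟩
      comm := fun x h => Prod.ext Fin.append_zero_zero (Fin.append_comp (· • h) x.1 x.2) }
  isWall := by
    refine ⟨fun x y => ?_, fun y y' => ?_, fun x => ?_, fun y => ?_⟩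
    · exact Fin.sum_univ_append₂ (· * ·) ..
    · show (∑ i, Fin.append y'.1.1 y'.2.1 i • Fin.append y.1.2 y.2.2 i)
          + P.eps • ∑ i, Fin.append y.1.1 y.2.1 i • Fin.append y'.1.2 y'.2.2 i
        = ((∑ i, y'.1.1 i • y.1.2 i) + P.eps • ∑ i, y.1.1 i • y'.1.2 i)
          + ((∑ i, y'.2.1 i • y.2.2 i) + P.eps • ∑ i, y.2.1 i • y'.2.2 i)
      rw [Fin.sum_univ_append₂ (· • ·), Fin.sum_univ_append₂ (· • ·), smul_add]
      abel
    · exact (add_zero 0).symm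
    · show P.bd (∑ i, Fin.append y.1.1 y.2.1 i • Fin.append y.1.2 y.2.2 i)
        = P.bd (∑ i, y.1.1 i • y.1.2 i) + P.bd (∑ i, y.2.1 i • y.2.2 i)
      rw [Fin.sum_univ_append₂ (· • ·), map_add]

end StdWall

section StableRank

variable {H : Type} [AddCommGroup H] [AddGroup.FG H] {P : FormParameter H} {M N : WallForm P}

lemma srankGE_of_wallHom (φ : WallHom M N) {k : ℕ} : srankGE M k → srankGE N k
  | ⟨j, ⟨ψ⟩⟩ => ⟨j, ⟨(φ.sumMap (.id _)).comp ψ⟩⟩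

lemma srankGE_zero (M : WallForm P) : srankGE M 0 :=
  ⟨0, ⟨WallHom.inr M (stdWall P 0)⟩⟩

lemma srankGE_sub_of_sum_stdWall {g k : ℕ} (h : srankGE (M.sum (stdWall P g)) k) :
    srankGE M (k - g) := by
  obtain hgk | hkg := le_total g k
  · obtain ⟨j, ⟨ψ⟩⟩ := h
    refine ⟨g + j, ?_⟩
    rw [show k - g + (g + j) = k + j by omega]
    exact ⟨((WallHom.id M).sumMap (stdWallAppend g j)).comp ((WallHom.sumAssoc ..).comp ψ)⟩
  · rw [Nat.sub_eq_zero_of_le hkg]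
    exact srankGE_zero M

end StableRank

section Splitting

variable {H : Type} [AddCommGroup H] {P : FormParameter H} {N M : WallForm P}

structure WallHom.IsAdjointRetraction (f : WallHom N M) (c : HPairHom M.carrier N.carrier) :
    Prop where
  lam_neg_left : ∀ a y, M.str.lam (f.hom.neg a) y = N.str.lam a (c.pos y)
  lam_pos_right : ∀ x b, M.str.lam x (f.hom.pos b) = N.str.lam (c.neg x) b
  mu_pos_right : ∀ y b, M.str.mu y (f.hom.pos b) = N.str.mu (c.pos y) b
  neg_left_inv : ∀ a, c.neg (f.hom.neg a) = a
  pos_left_inv : ∀ b, c.pos (f.hom.pos b) = b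

namespace WallHom

def orthProjNeg (f : WallHom N M) (c : HPairHom M.carrier N.carrier) :
    M.carrier.Neg →+ M.carrier.Neg :=
  AddMonoidHom.id _ - f.hom.neg.comp c.neg

def orthProjPos (f : WallHom N M) (c : HPairHom M.carrier N.carrier) :
    M.carrier.Pos →+ M.carrier.Pos :=
  AddMonoidHom.id _ - f.hom.pos.comp c.pos

variable {f : WallHom N M} {c : HPairHom M.carrier N.carrier}

@[simp] lemma orthProjNeg_apply (x : M.carrier.Neg) :
    f.orthProjNeg c x = x - f.hom.neg (c.neg x) := rfl

@[simp] lemma orthProjPos_apply (y : M.carrier.Pos) :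
    f.orthProjPos c y = y - f.hom.pos (c.pos y) := rfl

lemma orthProjPos_tau (x : M.carrier.Neg) (h : H) :
    f.orthProjPos c (M.carrier.tau x h) = M.carrier.tau (f.orthProjNeg c x) h := by
  simp [c.comm, f.hom.comm]

lemma alphaNeg_orthProj (x : M.carrier.Neg) :
    M.str.alphaNeg (f.orthProjNeg c x) + N.str.alphaNeg (c.neg x) = M.str.alphaNeg x := by
  simp

namespace IsAdjointRetraction

lemma mu_pos_left (hc : f.IsAdjointRetraction c) (b : N.carrier.Pos) (y : M.carrier.Pos) :
    M.str.mu (f.hom.pos b) y = N.str.mu b (c.pos y) := by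
  rw [M.str.mu_symm, hc.mu_pos_right, ← N.str.mu_symm]

lemma neg_orthProjNeg (hc : f.IsAdjointRetraction c) (x : M.carrier.Neg) :
    c.neg (f.orthProjNeg c x) = 0 := by
  simp [hc.neg_left_inv]

lemma pos_orthProjPos (hc : f.IsAdjointRetraction c) (y : M.carrier.Pos) :
    c.pos (f.orthProjPos c y) = 0 := by
  simp [hc.pos_left_inv]

lemma orthProjNeg_mem (hc : f.IsAdjointRetraction c) (x : M.carrier.Neg) :
    f.orthProjNeg c x ∈ (f.hom.rangeSub.perp M.str).neg := by
  rintro _ ⟨b, rfl⟩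
  rw [hc.lam_pos_right, hc.neg_orthProjNeg, map_zero, AddMonoidHom.zero_apply]

lemma orthProjPos_mem (hc : f.IsAdjointRetraction c) (y : M.carrier.Pos) :
    f.orthProjPos c y ∈ (f.hom.rangeSub.perp M.str).pos := by
  refine ⟨?_, ?_⟩ <;> rintro _ ⟨b, rfl⟩
  · rw [hc.lam_neg_left, hc.pos_orthProjPos, map_zero]
  · rw [hc.mu_pos_right, hc.pos_orthProjPos, map_zero, AddMonoidHom.zero_apply]

lemma lam_orthProj (hc : f.IsAdjointRetraction c) (x : M.carrier.Neg) (y : M.carrier.Pos) :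
    M.str.lam (f.orthProjNeg c x) (f.orthProjPos c y) + N.str.lam (c.neg x) (c.pos y)
      = M.str.lam x y := by
  simp [hc.lam_neg_left, hc.lam_pos_right, hc.pos_left_inv]

lemma mu_orthProj (hc : f.IsAdjointRetraction c) (y z : M.carrier.Pos) :
    M.str.mu (f.orthProjPos c y) (f.orthProjPos c z) + N.str.mu (c.pos y) (c.pos z)
      = M.str.mu y z := by
  simp [hc.mu_pos_left, hc.mu_pos_right, hc.pos_left_inv]

lemma alphaPos_orthProj (hc : f.IsAdjointRetraction c) (y : M.carrier.Pos) :
    M.str.alphaPos (f.orthProjPos c y) + N.str.alphaPos (c.pos y) = M.str.alphaPos y := by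
  have h := M.str.alphaPos_add (f.orthProjPos c y) (f.hom.pos (c.pos y))
  rwa [hc.mu_pos_right, hc.pos_orthProjPos, map_zero, AddMonoidHom.zero_apply, map_zero,
    add_zero, alphaPos_map, orthProjPos_apply, sub_add_cancel, eq_comm] at h

def splitting (hc : f.IsAdjointRetraction c) :
    WallHom M ((f.hom.rangeSub.perp M.str).toWall.sum N) where
  hom :=
    { neg := ((f.orthProjNeg c).codRestrict _ hc.orthProjNeg_mem).prod c.neg
      pos := ((f.orthProjPos c).codRestrict _ hc.orthProjPos_mem).prod c.pos
      comm := fun x h => Prod.ext (Subtype.ext (orthProjPos_tau x h)) (c.comm x h) }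
  isWall := ⟨hc.lam_orthProj, hc.mu_orthProj, alphaNeg_orthProj, hc.alphaPos_orthProj⟩

end IsAdjointRetraction

end WallHom

end Splitting

section StdAdjoint

/- `stdWall` is not reducible, so `simp` does not see the `Pi`/`Prod` structure of `W^g`:
computations inside `W^g` first `show` the goal in terms of `Fin g → ℤ` and `Fin g → H`. -/

variable {H : Type} [AddCommGroup H] [AddGroup.FG H] {P : FormParameter H} {g : ℕ}

lemma stdWall_neg_eq_sum (a : (stdWall P g).carrier.Neg) : a = ∑ t, a t • stdA t := by
  refine (Finset.univ_sum_single a).symm.trans (Finset.sum_congr rfl fun t _ => ?_)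
  show Pi.single t (a t) = a t • (Pi.single t 1 : Fin g → ℤ)
  rw [← Pi.single_smul', smul_eq_mul, mul_one]

lemma stdWall_pos_eq_sum (b : (stdWall P g).carrier.Pos) :
    b = ∑ t, b.1 t • stdB t + ∑ t, (stdWall P g).carrier.tau (stdA t) (b.2 t) := by
  show b = ∑ t, b.1 t • ((Pi.single t 1, 0) : (Fin g → ℤ) × (Fin g → H))
    + ∑ t, ((0 : Fin g → ℤ), fun i => (Pi.single t 1 : Fin g → ℤ) i • b.2 t)
  refine Prod.ext (funext fun i => ?_) (funext fun i => ?_)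
  · simp [Prod.fst_sum, Finset.sum_apply, Pi.single_apply]
  · simp [Prod.snd_sum, Finset.sum_apply, Pi.single_apply]

lemma stdWall_lam_stdB (a : (stdWall P g).carrier.Neg) (t : Fin g) :
    (stdWall P g).str.lam a (stdB t) = a t := by
  show ∑ i, a i * (Pi.single t 1 : Fin g → ℤ) i = a t
  simp only [Pi.single_apply, mul_ite, mul_one, mul_zero]
  exact Fintype.sum_ite_eq' t a

lemma stdWall_lam_stdA (t : Fin g) (b : (stdWall P g).carrier.Pos) :
    (stdWall P g).str.lam (stdA t) b = b.1 t := by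
  show ∑ i, (Pi.single t 1 : Fin g → ℤ) i * b.1 i = b.1 t
  simp [Pi.single_apply]

lemma stdWall_mu_stdB (b : (stdWall P g).carrier.Pos) (t : Fin g) :
    (stdWall P g).str.mu b (stdB t) = b.2 t := by
  show (∑ i, (Pi.single t 1 : Fin g → ℤ) i • b.2 i) + P.eps • ∑ i, b.1 i • (0 : Fin g → H) i
    = b.2 t
  simp [Pi.single_apply]

variable {M : WallForm P} (f : WallHom (stdWall P g) M)

lemma WallHom.neg_eq_sum (a : (stdWall P g).carrier.Neg) :
    f.hom.neg a = ∑ t, a t • f.hom.neg (stdA t) := by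
  conv_lhs => rw [stdWall_neg_eq_sum a]
  simp [map_sum]

lemma WallHom.pos_eq_sum (b : (stdWall P g).carrier.Pos) :
    f.hom.pos b = ∑ t, b.1 t • f.hom.pos (stdB t)
      + ∑ t, M.carrier.tau (f.hom.neg (stdA t)) (b.2 t) := by
  conv_lhs => rw [stdWall_pos_eq_sum b]
  simp [map_sum, f.hom.comm]

def stdAdjoint : HPairHom M.carrier (stdWall P g).carrier where
  neg := AddMonoidHom.pi fun t => M.str.lam.flip (f.hom.pos (stdB t))
  pos := (AddMonoidHom.pi fun t => M.str.lam (f.hom.neg (stdA t))).prod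
    (AddMonoidHom.pi fun t => M.str.mu.flip (f.hom.pos (stdB t)))
  comm _ _ := Prod.ext (funext fun _ => M.str.lam_tau _ _ _) (funext fun _ => M.str.mu_tau _ _ _)

lemma stdAdjoint_neg_apply (x : M.carrier.Neg) :
    (stdAdjoint f).neg x = fun t => M.str.lam x (f.hom.pos (stdB t)) := rfl

lemma stdAdjoint_pos_apply (y : M.carrier.Pos) :
    (stdAdjoint f).pos y
      = (fun t => M.str.lam (f.hom.neg (stdA t)) y, fun t => M.str.mu y (f.hom.pos (stdB t))) :=
  rfl

lemma isAdjointRetraction_stdAdjoint : f.IsAdjointRetraction (stdAdjoint f) where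
  lam_neg_left a y := by
    rw [f.neg_eq_sum, stdWall_lam, stdAdjoint_pos_apply]
    simp [map_sum]
  lam_pos_right x b := by
    rw [f.pos_eq_sum, stdWall_lam, stdAdjoint_neg_apply]
    simp [map_sum, mul_comm, M.str.lam_tau]
  mu_pos_right y b := by
    rw [f.pos_eq_sum, stdWall_mu, stdAdjoint_pos_apply]
    simp [map_sum, WallAux.mu_tau_right, Finset.smul_sum]
  neg_left_inv a := funext fun t => by simp [stdAdjoint_neg_apply, stdWall_lam_stdB]
  pos_left_inv b := by
    rw [stdAdjoint_pos_apply]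
    exact Prod.ext (funext fun t => by simp [stdWall_lam_stdA])
      (funext fun t => by simp [stdWall_mu_stdB])

end StdAdjoint

/-- For a morphism `f : W^g → M` of Wall forms, the stable
rank satisfies `r̄(f(W^g)^⊥) ≥ r̄(M) − g`. -/
theorem statement_5 {H : Type} [AddCommGroup H] [AddGroup.FG H]
    (P : FormParameter H) (M : WallForm P) (g : ℕ)
    (f : WallHom (stdWall P g) M) (k : ℕ) (hk : srankGE M k) :
    srankGE (f.hom.rangeSub.perp M.str).toWall (k - g) :=
  srankGE_sub_of_sum_stdWall
    (srankGE_of_wallHom (isAdjointRetraction_stdAdjoint f).splitting hk)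
end

section
/- For all g ∈ ℕ, every Wall form endomorphism f : W^g → W^g of the standard Wall form of rank g is an automorphism. -/
/-!
The pairing `λ(x, y) = x ⬝ᵥ y.1` on `W^g` is perfect, so `λ`-invariance of `f` says that the
integer matrix `A` of `f₋` satisfies `(f₊ y).1 ᵥ* A = y.1`. Hence `A` is invertible over `ℤ` and
`f₋` is onto. Since `f₊ ∘ τ = τ ∘ (f₋ × id)`, the image of `f₊` contains `τ(W₋, H)`, which
generates `0 × H^g`; together with surjectivity on the first coordinate this makes `f₊` onto.
A surjective endomorphism of a finitely generated abelian group is injective, so both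
components of `f` are bijective, and the inverse of a bijective morphism of Wall forms is again
one.
-/

open Function

theorem AddMonoidHom.bijective_of_surjective_of_fg {A : Type*} [AddCommGroup A]
    (hA : AddGroup.FG A) (f : A →+ A) (hf : Surjective f) : Bijective f :=
  haveI := Module.Finite.iff_addGroup_fg.mpr hA
  OrzechProperty.bijective_of_surjective_endomorphism f.toIntLinearMap hf

theorem HPairHom.tau_mem_range_pos {H : Type} [AddCommGroup H] {C D : HPair H}
    (f : HPairHom C D) (hf : Surjective f.neg) (x : D.Neg) (h : H) :
    D.tau x h ∈ f.pos.range := by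
  obtain ⟨x, rfl⟩ := hf x
  exact ⟨C.tau x h, f.comm x h⟩

namespace WallHom

variable {H : Type} [AddCommGroup H] {P : FormParameter H}

noncomputable def toWallIso {M N : WallForm P} (f : WallHom M N)
    (hneg : Bijective f.hom.neg) (hpos : Bijective f.hom.pos) : WallIso M N :=
  let eNeg := AddEquiv.ofBijective f.hom.neg hneg
  let ePos := AddEquiv.ofBijective f.hom.pos hpos
  { toHom := f
    invHom :=
      { hom :=
          { neg := eNeg.symm
            pos := ePos.symm
            comm := fun x h => hpos.injective <| by
              simp [eNeg, ePos, f.hom.comm] }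
        isWall := by
          obtain ⟨hlam, hmu, halphaNeg, halphaPos⟩ := f.isWall
          refine ⟨fun x y => ?_, fun y y' => ?_, fun x => ?_, fun y => ?_⟩
          · simp [eNeg, ePos, ← hlam]
          · simp [ePos, ← hmu]
          · simp [eNeg, ← halphaNeg]
          · simp [ePos, ← halphaPos] }
    left_neg := eNeg.symm_apply_apply
    right_neg := eNeg.apply_symm_apply
    left_pos := ePos.symm_apply_apply
    right_pos := ePos.apply_symm_apply }

end WallHom

section StdWallEndomorphism

open Matrix

variable {H : Type} [AddCommGroup H] [AddGroup.FG H] {P : FormParameter H} {g : ℕ}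

theorem stdWall_tau_single (j : Fin g) (h : H) :
    (stdWall P g).carrier.tau (Pi.single j 1) h = (0, Pi.single j h) := by
  refine Prod.ext rfl (funext fun i => ?_)
  show (Pi.single j 1 : Fin g → ℤ) i • h = (Pi.single j h : Fin g → H) i
  simp [Pi.single_apply]

namespace WallHom

variable (f : WallHom (stdWall P g) (stdWall P g))

noncomputable def negMatrix : Matrix (Fin g) (Fin g) ℤ :=
  LinearMap.toMatrix' (f.hom.neg : (Fin g → ℤ) →+ (Fin g → ℤ)).toIntLinearMap

theorem negMatrix_mulVec (x : Fin g → ℤ) : f.negMatrix *ᵥ x = f.hom.neg x :=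
  LinearMap.toMatrix'_mulVec _ x

theorem neg_dotProduct_pos (x : Fin g → ℤ) (y : (Fin g → ℤ) × (Fin g → H)) :
    f.hom.neg x ⬝ᵥ (f.hom.pos y).1 = x ⬝ᵥ y.1 :=
  f.isWall.1 x y

theorem vecMul_negMatrix (y : (Fin g → ℤ) × (Fin g → H)) :
    (f.hom.pos y).1 ᵥ* f.negMatrix = y.1 := by
  funext i
  have hlam := f.neg_dotProduct_pos (Pi.single i 1) y
  rw [← negMatrix_mulVec, dotProduct_comm, dotProduct_mulVec, single_one_dotProduct] at hlam
  rw [← hlam, dotProduct_single_one]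

theorem isUnit_negMatrix : IsUnit f.negMatrix :=
  vecMul_surjective_iff_isUnit.mp fun u => ⟨_, f.vecMul_negMatrix (u, 0)⟩

theorem neg_surjective : Surjective f.hom.neg := by
  intro x
  obtain ⟨u, hu⟩ := mulVec_surjective_iff_isUnit.mpr f.isUnit_negMatrix x
  exact ⟨u, (f.negMatrix_mulVec u).symm.trans hu⟩

theorem zero_prod_mem_range_pos (v : Fin g → H) : ((0 : Fin g → ℤ), v) ∈ f.hom.pos.range := by
  have hv : ((0 : Fin g → ℤ), v) = ∑ j, ((0 : Fin g → ℤ), Pi.single j (v j)) := by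
    simp [Prod.ext_iff, Prod.fst_sum, Prod.snd_sum, Finset.univ_sum_single]
  rw [hv]
  refine AddSubgroup.sum_mem _ fun j _ => ?_
  rw [← stdWall_tau_single]
  exact f.hom.tau_mem_range_pos f.neg_surjective _ _

theorem pos_surjective : Surjective f.hom.pos := by
  intro y
  obtain ⟨z, hz⟩ : ∃ z, (f.hom.pos z).1 = y.1 :=
    ⟨(y.1 ᵥ* f.negMatrix, 0), vecMul_injective_of_isUnit f.isUnit_negMatrix
      (f.vecMul_negMatrix _)⟩
  obtain ⟨w, hw⟩ := f.zero_prod_mem_range_pos (y.2 - (f.hom.pos z).2)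
  refine ⟨w + z, ?_⟩
  rw [map_add, hw]
  exact Prod.ext (zero_add _ |>.trans hz) (sub_add_cancel _ _)

end WallHom

end StdWallEndomorphism

/-- Every Wall form endomorphism of the standard Wall form
`W^g` is an automorphism. -/
theorem statement_8 {H : Type} [AddCommGroup H] [AddGroup.FG H]
    (P : FormParameter H) (g : ℕ) (f : WallHom (stdWall P g) (stdWall P g)) :
    ∃ e : WallIso (stdWall P g) (stdWall P g), e.toHom = f :=
  ⟨f.toWallIso
    (f.hom.neg.bijective_of_surjective_of_fg (stdWall P g).fgNeg f.neg_surjective)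
    (f.hom.pos.bijective_of_surjective_of_fg (stdWall P g).fgPos f.pos_surjective), rfl⟩
end
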